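/- arXiv:1202.2519 — 5 statements merged into one kernel-verified Lean document; each statement's English description precedes it below -/
import Mathlib

section
/- In the exterior complex (E, d) as above, the element b_0 := h_{1,1}h_{3,2} + h_{2,1}h_{2,0} + h_{3,1}h_{1,1} is a cocycle: d(b_0) = 0. -/
/-! Expanding `d` of each of the three products by the Leibniz rule gives six cubic monomials,
which cancel in pairs already in the free associative algebra: anticommutativity of the
generators is never needed, only `j + 3 = j` in `ZMod 3`. The computation is uniform in `j`,
and `b_0` is the instance `j = 1`. -/

/-- The exterior algebra over `ZMod p` on nine degree-one generators `h i j`,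
`i ∈ {1,2,3}`, `j ∈ ZMod 3`. -/
abbrev E (p : ℕ) : Type := ExteriorAlgebra (ZMod p) ((Fin 3 × ZMod 3) → ZMod p)

open Fin.NatCast in
/-- The generator `h_{i,j}` (for `i ∈ {1,2,3}`). -/
noncomputable def h (p : ℕ) (i : ℕ) (j : ZMod 3) : E p :=
  ExteriorAlgebra.ι (ZMod p) (Pi.single (((i - 1 : ℕ) : Fin 3), j) 1)

lemma zmod3_add_one_add_two (j : ZMod 3) : j + 1 + 2 = j := by
  revert j; decide

lemma zmod3_add_one_add_one (j : ZMod 3) : j + 1 + 1 = j + 2 := by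
  revert j; decide

lemma zmod3_add_two_add_one (j : ZMod 3) : j + 2 + 1 = j := by
  revert j; decide

section
variable {p : ℕ} (d : E p →ₗ[ZMod p] E p)

lemma d_h1_mul_h3 (hd1 : ∀ j : ZMod 3, d (h p 1 j) = 0)
    (hd3 : ∀ j : ZMod 3, d (h p 3 j) = h p 1 j * h p 2 (j + 1) + h p 2 j * h p 1 (j + 2))
    (hleib1 : ∀ (j : ZMod 3) (y : E p), d (h p 1 j * y) = d (h p 1 j) * y - h p 1 j * d y)
    (j : ZMod 3) :
    d (h p 1 j * h p 3 (j + 1)) =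
      -(h p 1 j * (h p 1 (j + 1) * h p 2 (j + 2) + h p 2 (j + 1) * h p 1 j)) := by
  rw [hleib1, hd1, hd3, zmod3_add_one_add_one, zmod3_add_one_add_two, zero_mul, zero_sub]

lemma d_h2_mul_h2 (hd2 : ∀ j : ZMod 3, d (h p 2 j) = h p 1 j * h p 1 (j + 1))
    (hleib2 : ∀ (j : ZMod 3) (y : E p), d (h p 2 j * y) = d (h p 2 j) * y - h p 2 j * d y)
    (j : ZMod 3) :
    d (h p 2 j * h p 2 (j + 2)) =
      h p 1 j * h p 1 (j + 1) * h p 2 (j + 2) - h p 2 j * (h p 1 (j + 2) * h p 1 j) := by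
  rw [hleib2, hd2, hd2, zmod3_add_two_add_one]

lemma d_h3_mul_h1 (hd1 : ∀ j : ZMod 3, d (h p 1 j) = 0)
    (hd3 : ∀ j : ZMod 3, d (h p 3 j) = h p 1 j * h p 2 (j + 1) + h p 2 j * h p 1 (j + 2))
    (hleib3 : ∀ (j : ZMod 3) (y : E p), d (h p 3 j * y) = d (h p 3 j) * y - h p 3 j * d y)
    (j : ZMod 3) :
    d (h p 3 j * h p 1 j) = (h p 1 j * h p 2 (j + 1) + h p 2 j * h p 1 (j + 2)) * h p 1 j := by
  rw [hleib3, hd3, hd1, mul_zero, sub_zero]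

lemma d_cocycle (hd1 : ∀ j : ZMod 3, d (h p 1 j) = 0)
    (hd2 : ∀ j : ZMod 3, d (h p 2 j) = h p 1 j * h p 1 (j + 1))
    (hd3 : ∀ j : ZMod 3, d (h p 3 j) = h p 1 j * h p 2 (j + 1) + h p 2 j * h p 1 (j + 2))
    (hleib : ∀ i ∈ ({1, 2, 3} : Set ℕ), ∀ (j : ZMod 3) (y : E p),
      d (h p i j * y) = d (h p i j) * y - h p i j * d y)
    (j : ZMod 3) :
    d (h p 1 j * h p 3 (j + 1) + h p 2 j * h p 2 (j + 2) + h p 3 j * h p 1 j) = 0 := by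
  rw [map_add, map_add, d_h1_mul_h3 d hd1 hd3 (hleib 1 (by simp)),
    d_h2_mul_h2 d hd2 (hleib 2 (by simp)), d_h3_mul_h1 d hd1 hd3 (hleib 3 (by simp))]
  noncomm_ring

end

theorem b0_cocycle_general (p : ℕ)
    (d : E p →ₗ[ZMod p] E p)
    (hd1 : ∀ j : ZMod 3, d (h p 1 j) = 0)
    (hd2 : ∀ j : ZMod 3, d (h p 2 j) = h p 1 j * h p 1 (j + 1))
    (hd3 : ∀ j : ZMod 3, d (h p 3 j) = h p 1 j * h p 2 (j + 1) + h p 2 j * h p 1 (j + 2))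
    (hleib : ∀ i ∈ ({1, 2, 3} : Set ℕ), ∀ (j : ZMod 3) (y : E p),
      d (h p i j * y) = d (h p i j) * y - h p i j * d y)
    :
    d (h p 1 1 * h p 3 2 + h p 2 1 * h p 2 0 + h p 3 1 * h p 1 1) = 0 :=
  d_cocycle d hd1 hd2 hd3 hleib 1

theorem b0_cocycle (p : ℕ) (hp : p.Prime) (hodd : Odd p)
    (d : E p →ₗ[ZMod p] E p)
    (hd0 : d 1 = 0)
    (hd1 : ∀ j : ZMod 3, d (h p 1 j) = 0)
    (hd2 : ∀ j : ZMod 3, d (h p 2 j) = h p 1 j * h p 1 (j + 1))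
    (hd3 : ∀ j : ZMod 3, d (h p 3 j) = h p 1 j * h p 2 (j + 1) + h p 2 j * h p 1 (j + 2))
    (hleib : ∀ i ∈ ({1, 2, 3} : Set ℕ), ∀ (j : ZMod 3) (y : E p),
      d (h p i j * y) = d (h p i j) * y - h p i j * d y)
    :
    d (h p 1 1 * h p 3 2 + h p 2 1 * h p 2 0 + h p 3 1 * h p 1 1) = 0 :=
  b0_cocycle_general p d hd1 hd2 hd3 hleib
end

section
/- In the exterior complex (E, d) as above, the element b_2 := h_{1,0}h_{3,1} + h_{2,0}h_{2,2} + h_{3,0}h_{1,0} is a cocycle: d(b_2) = 0. -/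
theorem b2_cocycle_general (p : ℕ)
    (d : E p →ₗ[ZMod p] E p)
    (hd1 : ∀ j : ZMod 3, d (h p 1 j) = 0)
    (hd2 : ∀ j : ZMod 3, d (h p 2 j) = h p 1 j * h p 1 (j + 1))
    (hd3 : ∀ j : ZMod 3, d (h p 3 j) = h p 1 j * h p 2 (j + 1) + h p 2 j * h p 1 (j + 2))
    (hleib : ∀ i ∈ ({1, 2, 3} : Set ℕ), ∀ (j : ZMod 3) (y : E p),
      d (h p i j * y) = d (h p i j) * y - h p i j * d y)
    :
    d (h p 1 0 * h p 3 1 + h p 2 0 * h p 2 2 + h p 3 0 * h p 1 0) = 0 := by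
  have dh20 : d (h p 2 0) = h p 1 0 * h p 1 1 := hd2 0
  have dh22 : d (h p 2 2) = h p 1 2 * h p 1 0 := hd2 2
  have dh30 : d (h p 3 0) = h p 1 0 * h p 2 1 + h p 2 0 * h p 1 2 := hd3 0
  have dh31 : d (h p 3 1) = h p 1 1 * h p 2 2 + h p 2 1 * h p 1 0 := hd3 1
  rw [map_add, map_add, hleib 1 (by simp) 0, hleib 2 (by simp) 0, hleib 3 (by simp) 0,
    hd1 0, dh20, dh22, dh30, dh31]
  -- The six resulting monomials cancel in pairs without any use of anticommutativity.
  noncomm_ring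

theorem b2_cocycle (p : ℕ) (hp : p.Prime) (hodd : Odd p)
    (d : E p →ₗ[ZMod p] E p)
    (hd0 : d 1 = 0)
    (hd1 : ∀ j : ZMod 3, d (h p 1 j) = 0)
    (hd2 : ∀ j : ZMod 3, d (h p 2 j) = h p 1 j * h p 1 (j + 1))
    (hd3 : ∀ j : ZMod 3, d (h p 3 j) = h p 1 j * h p 2 (j + 1) + h p 2 j * h p 1 (j + 2))
    (hleib : ∀ i ∈ ({1, 2, 3} : Set ℕ), ∀ (j : ZMod 3) (y : E p),
      d (h p i j * y) = d (h p i j) * y - h p i j * d y)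
    :
    d (h p 1 0 * h p 3 1 + h p 2 0 * h p 2 2 + h p 3 0 * h p 1 0) = 0 :=
  b2_cocycle_general p d hd1 hd2 hd3 hleib
end

section
/- In the exterior complex (E, d) as above, the cocycle h_{1,0}·h_{2,1}·h_{1,2} is a coboundary; explicitly, d(h_{3,0}·h_{1,2}) = h_{1,0}h_{2,1}h_{1,2}. Consequently the product of the cohomology classes of h_{1,0} and k_1 = h_{2,1}h_{1,2} vanishes in H*(E, d). -/
theorem h0k1_coboundary_general (p : ℕ)
    (d : E p →ₗ[ZMod p] E p)
    (hd1 : ∀ j : ZMod 3, d (h p 1 j) = 0)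
    (hd3 : ∀ j : ZMod 3, d (h p 3 j) = h p 1 j * h p 2 (j + 1) + h p 2 j * h p 1 (j + 2))
    (hleib : ∀ i ∈ ({1, 2, 3} : Set ℕ), ∀ (j : ZMod 3) (y : E p),
      d (h p i j * y) = d (h p i j) * y - h p i j * d y)
    :
    d (h p 3 0 * h p 1 2) = h p 1 0 * (h p 2 1 * h p 1 2) ∧
    ∃ ω : E p, d ω = h p 1 0 * (h p 2 1 * h p 1 2) := by
  have h12_sq : h p 1 2 * h p 1 2 = 0 := ExteriorAlgebra.ι_sq_zero _
  have hd : d (h p 3 0 * h p 1 2) = h p 1 0 * (h p 2 1 * h p 1 2) := by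
    rw [hleib 3 (by simp) 0, hd1, hd3, zero_add, zero_add, mul_zero, sub_zero, add_mul,
      mul_assoc, mul_assoc, h12_sq, mul_zero, add_zero]
  exact ⟨hd, _, hd⟩

theorem h0k1_coboundary (p : ℕ) (hp : p.Prime) (hodd : Odd p)
    (d : E p →ₗ[ZMod p] E p)
    (hd0 : d 1 = 0)
    (hd1 : ∀ j : ZMod 3, d (h p 1 j) = 0)
    (hd2 : ∀ j : ZMod 3, d (h p 2 j) = h p 1 j * h p 1 (j + 1))
    (hd3 : ∀ j : ZMod 3, d (h p 3 j) = h p 1 j * h p 2 (j + 1) + h p 2 j * h p 1 (j + 2))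
    (hleib : ∀ i ∈ ({1, 2, 3} : Set ℕ), ∀ (j : ZMod 3) (y : E p),
      d (h p i j * y) = d (h p i j) * y - h p i j * d y)
    :
    d (h p 3 0 * h p 1 2) = h p 1 0 * (h p 2 1 * h p 1 2) ∧
    ∃ ω : E p, d ω = h p 1 0 * (h p 2 1 * h p 1 2) :=
  h0k1_coboundary_general p d hd1 hd3 hleib
end

section
/- In the exterior algebra E over F_p on generators h_{i,j} (i ∈ {1,2,3}, j ∈ Z/3), set b_0 = h_{1,1}h_{3,2} + h_{2,1}h_{2,0} + h_{3,1}h_{1,1}, b_2 = h_{1,0}h_{3,1} + h_{2,0}h_{2,2} + h_{3,0}h_{1,0}, and ζ_3 = h_{3,0} + h_{3,1} + h_{3,2}. Then h_{1,0}·(h_{1,2}h_{2,1}h_{3,0})·b_0·b_2·ζ_3 = −2·h_{1,0}h_{1,1}h_{1,2}h_{2,0}h_{2,1}h_{2,2}h_{3,0}h_{3,1}h_{3,2}, the right-hand side being −2 times the top exterior class. -/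
namespace ExteriorAlgebra

variable {R M : Type*} [CommRing R] [AddCommGroup M] [Module R M]

theorem ι_mul_ι_eq_neg (x y : M) : ι R x * ι R y = -(ι R y * ι R x) :=
  eq_neg_of_add_eq_zero_left (ι_add_mul_swap x y)

theorem ι_mul_ι_mul_eq_neg (x y : M) (z : ExteriorAlgebra R M) :
    ι R x * (ι R y * z) = -(ι R y * (ι R x * z)) := by
  rw [← mul_assoc, ι_mul_ι_eq_neg, neg_mul, mul_assoc]

theorem ι_mul_ι_mul_self (x : M) (z : ExteriorAlgebra R M) : ι R x * (ι R x * z) = 0 := by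
  rw [← mul_assoc, ι_sq_zero, zero_mul]

end ExteriorAlgebra

open ExteriorAlgebra

section Generators

variable {p : ℕ}

theorem h_mul_self (i : ℕ) (a : ZMod 3) : h p i a * h p i a = 0 := ι_sq_zero _

theorem h_mul_h_mul_self (i : ℕ) (a : ZMod 3) (z : E p) : h p i a * (h p i a * z) = 0 :=
  ι_mul_ι_mul_self _ _

theorem h_mul_h_eq_neg (i j : ℕ) (a b : ZMod 3) : h p i a * h p j b = -(h p j b * h p i a) :=
  ι_mul_ι_eq_neg _ _

theorem h_mul_h_mul_eq_neg (i j : ℕ) (a b : ZMod 3) (z : E p) :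
    h p i a * (h p j b * z) = -(h p j b * (h p i a * z)) :=
  ι_mul_ι_mul_eq_neg _ _ _

end Generators

theorem h0_l_b0_b2_zeta3_general (p : ℕ)
    :
    h p 1 0 * (h p 1 2 * h p 2 1 * h p 3 0) *
        (h p 1 1 * h p 3 2 + h p 2 1 * h p 2 0 + h p 3 1 * h p 1 1) *
        (h p 1 0 * h p 3 1 + h p 2 0 * h p 2 2 + h p 3 0 * h p 1 0) *
        (h p 3 0 + h p 3 1 + h p 3 2) =
      (-2 : ZMod p) • (h p 1 0 * h p 1 1 * h p 1 2 * h p 2 0 * h p 2 1 * h p 2 2 *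
        h p 3 0 * h p 3 1 * h p 3 2) := by
  -- The anticommutation rule is instantiated only for pairs out of lexicographic order in
  -- `(i, j)`, so this bubble-sorts every monomial and terminates.
  simp only [mul_add, add_mul, mul_assoc, h_mul_self, h_mul_h_mul_self,
    h_mul_h_eq_neg 3 1, h_mul_h_eq_neg 3 2,
    fun i => h_mul_h_eq_neg (p := p) i i 1 0, fun i => h_mul_h_eq_neg (p := p) i i 2 0,
    fun i => h_mul_h_eq_neg (p := p) i i 2 1,
    h_mul_h_mul_eq_neg 2 1, h_mul_h_mul_eq_neg 3 1, h_mul_h_mul_eq_neg 3 2,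
    fun i => h_mul_h_mul_eq_neg (p := p) i i 1 0, fun i => h_mul_h_mul_eq_neg (p := p) i i 2 0,
    fun i => h_mul_h_mul_eq_neg (p := p) i i 2 1,
    neg_mul, mul_neg, neg_neg, mul_zero, neg_zero, add_zero, zero_add]
  module

theorem h0_l_b0_b2_zeta3 (p : ℕ) (hp : p.Prime) (hodd : Odd p)
    :
    h p 1 0 * (h p 1 2 * h p 2 1 * h p 3 0) *
        (h p 1 1 * h p 3 2 + h p 2 1 * h p 2 0 + h p 3 1 * h p 1 1) *
        (h p 1 0 * h p 3 1 + h p 2 0 * h p 2 2 + h p 3 0 * h p 1 0) *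
        (h p 3 0 + h p 3 1 + h p 3 2) =
      (-2 : ZMod p) • (h p 1 0 * h p 1 1 * h p 1 2 * h p 2 0 * h p 2 1 * h p 2 2 *
        h p 3 0 * h p 3 1 * h p 3 2) :=
  h0_l_b0_b2_zeta3_general p
end

section
/- In the exterior complex (E, d) as above, the class of h_{1,1}·k_1·ζ_3 is represented by a nonzero cocycle: the element h_{1,1}h_{2,1}h_{1,2}(h_{3,0}+h_{3,1}+h_{3,2}) is a cocycle in E (d of it is 0), and it is a nonzero element of E. -/
/-!
`ζ₃` is a cocycle because the terms of `d ζ₃ = ∑ⱼ (h_{1,j} h_{2,j+1} + h_{2,j} h_{1,j+2})`, reindexed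
cyclically, pair up into anticommutators `h_{1,j} h_{2,j+1} + h_{2,j+1} h_{1,j} = 0`. By the Leibniz
rule so is `h_{1,2} ζ₃`, and then `k₁ ζ₃` is too, since `d h_{2,1} · h_{1,2} = h_{1,1} h_{1,2}²
= 0`; one more Leibniz step gives the cocycle `h_{1,1} k₁ ζ₃`.

It is nonzero because it is the exterior product of the four linearly independent vectors
`e_{1,1}, e_{2,1}, e_{1,2}, e_{3,0} + e_{3,1} + e_{3,2}`, and over a field such a product is a member
of a basis of the corresponding exterior power.
-/

theorem ExteriorAlgebra.ιMulti_ne_zero_of_linearIndependent {K V : Type*} [Field K]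
    [AddCommGroup V] [Module K V] {n : ℕ} {v : Fin n → V} (hv : LinearIndependent K v) :
    ιMulti K n v ≠ 0 := by
  have := (exteriorPower.ιMulti_family_linearIndependent_field (n := n) hv).ne_zero
    (Set.powersetCard.ofFinEmbEquiv ((OrderIso.refl (Fin n)).toOrderEmbedding))
  contrapose! this
  exact Subtype.ext (by simpa [exteriorPower.ιMulti_family] using this)

theorem h_mul_self_eq_zero (p : ℕ) (i : ℕ) (j : ZMod 3) : h p i j * h p i j = 0 :=
  ExteriorAlgebra.ι_sq_zero _

theorem h_add_mul_swap (p : ℕ) (i i' : ℕ) (j j' : ZMod 3) :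
    h p i j * h p i' j' + h p i' j' * h p i j = 0 :=
  ExteriorAlgebra.ι_add_mul_swap _ _

theorem map_zeta3_eq_zero (p : ℕ) (d : E p →ₗ[ZMod p] E p)
    (hd3 : ∀ j : ZMod 3, d (h p 3 j) = h p 1 j * h p 2 (j + 1) + h p 2 j * h p 1 (j + 2)) :
    d (h p 3 0 + h p 3 1 + h p 3 2) = 0 := by
  have hζ : h p 3 0 + h p 3 1 + h p 3 2 = ∑ j, h p 3 j := (Fin.sum_univ_three _).symm
  have hshift : ∑ j, h p 2 j * h p 1 (j + 2) = ∑ j, h p 2 (j + 1) * h p 1 j := by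
    refine (Fintype.sum_equiv (Equiv.addRight 1) _ _ fun j => ?_).symm
    simp [add_assoc, show (1 + 2 : ZMod 3) = 0 from rfl]
  rw [hζ, map_sum, Finset.sum_congr rfl fun j _ => hd3 j, Finset.sum_add_distrib, hshift,
    ← Finset.sum_add_distrib]
  exact Finset.sum_eq_zero fun j _ => h_add_mul_swap p 1 2 j (j + 1)

theorem linearIndependent_h11_h21_h12_zeta3 (K : Type*) [Field K] :
    LinearIndependent K ![(Pi.single (0, 1) 1 : Fin 3 × ZMod 3 → K), Pi.single (1, 1) 1,
      Pi.single (0, 2) 1, Pi.single (2, 0) 1 + Pi.single (2, 1) 1 + Pi.single (2, 2) 1] := by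
  rw [Fintype.linearIndependent_iff]
  intro g hg
  have hg01 := congrFun hg (0, 1)
  have hg11 := congrFun hg (1, 1)
  have hg02 := congrFun hg (0, 2)
  have hg20 := congrFun hg (2, 0)
  simp +decide [Fin.sum_univ_four] at hg01 hg11 hg02 hg20
  intro i
  fin_cases i <;> assumption

open Fin.NatCast in
theorem h11_mul_k1_mul_zeta3_eq_ιMulti (p : ℕ) :
    h p 1 1 * (h p 2 1 * h p 1 2) * (h p 3 0 + h p 3 1 + h p 3 2) =
      ExteriorAlgebra.ιMulti (ZMod p) 4 ![Pi.single (0, 1) 1, Pi.single (1, 1) 1,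
        Pi.single (0, 2) 1, Pi.single (2, 0) 1 + Pi.single (2, 1) 1 + Pi.single (2, 2) 1] := by
  simp [ExteriorAlgebra.ιMulti_apply, mul_assoc, h]

theorem h1k1zeta3_nonzero_cocycle_general (p : ℕ) (hp : p.Prime)
    (d : E p →ₗ[ZMod p] E p)
    (hd1 : ∀ j : ZMod 3, d (h p 1 j) = 0)
    (hd2 : ∀ j : ZMod 3, d (h p 2 j) = h p 1 j * h p 1 (j + 1))
    (hd3 : ∀ j : ZMod 3, d (h p 3 j) = h p 1 j * h p 2 (j + 1) + h p 2 j * h p 1 (j + 2))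
    (hleib : ∀ i ∈ ({1, 2, 3} : Set ℕ), ∀ (j : ZMod 3) (y : E p),
      d (h p i j * y) = d (h p i j) * y - h p i j * d y)
    :
    d (h p 1 1 * (h p 2 1 * h p 1 2) * (h p 3 0 + h p 3 1 + h p 3 2)) = 0 ∧
    h p 1 1 * (h p 2 1 * h p 1 2) * (h p 3 0 + h p 3 1 + h p 3 2) ≠ 0 := by
  have := Fact.mk hp
  set ζ₃ := h p 3 0 + h p 3 1 + h p 3 2
  have hζ₃ : d ζ₃ = 0 := map_zeta3_eq_zero p d hd3
  have hh12ζ₃ : d (h p 1 2 * ζ₃) = 0 := by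
    rw [hleib 1 (by simp) 2, hd1, hζ₃, zero_mul, mul_zero, sub_zero]
  have hk1ζ₃ : d (h p 2 1 * (h p 1 2 * ζ₃)) = 0 := by
    rw [hleib 2 (by simp) 1, hd2, hh12ζ₃, mul_zero, sub_zero, show (1 + 1 : ZMod 3) = 2 from rfl,
      mul_assoc, ← mul_assoc (h p 1 2), h_mul_self_eq_zero, zero_mul, mul_zero]
  refine ⟨?_, ?_⟩
  · rw [mul_assoc, mul_assoc, hleib 1 (by simp) 1, hd1, hk1ζ₃, zero_mul, mul_zero, sub_zero]
  · rw [h11_mul_k1_mul_zeta3_eq_ιMulti]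
    exact ExteriorAlgebra.ιMulti_ne_zero_of_linearIndependent
      (linearIndependent_h11_h21_h12_zeta3 (ZMod p))

theorem h1k1zeta3_nonzero_cocycle (p : ℕ) (hp : p.Prime) (hodd : Odd p)
    (d : E p →ₗ[ZMod p] E p)
    (hd0 : d 1 = 0)
    (hd1 : ∀ j : ZMod 3, d (h p 1 j) = 0)
    (hd2 : ∀ j : ZMod 3, d (h p 2 j) = h p 1 j * h p 1 (j + 1))
    (hd3 : ∀ j : ZMod 3, d (h p 3 j) = h p 1 j * h p 2 (j + 1) + h p 2 j * h p 1 (j + 2))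
    (hleib : ∀ i ∈ ({1, 2, 3} : Set ℕ), ∀ (j : ZMod 3) (y : E p),
      d (h p i j * y) = d (h p i j) * y - h p i j * d y)
    :
    d (h p 1 1 * (h p 2 1 * h p 1 2) * (h p 3 0 + h p 3 1 + h p 3 2)) = 0 ∧
    h p 1 1 * (h p 2 1 * h p 1 2) * (h p 3 0 + h p 3 1 + h p 3 2) ≠ 0 :=
  h1k1zeta3_nonzero_cocycle_general p hp d hd1 hd2 hd3 hleib
end
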